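/- arXiv:1002.2177 — 2 statements merged into one kernel-verified Lean document; each statement's English description precedes it below -/
import Mathlib

section
/- Let 𝔤 be the Lie algebra with de¹ = e³⁵, de² = e⁴⁵, de³ = de⁴ = de⁵ = 0 (the nilpotent Lie algebra A₅,₁). Then the SU(2)-structure given by the adapted coframe f¹=e¹, f²=e³, f³=e², f⁴=e⁴, f⁵=e⁵ is hypo: the forms ω₁ = e¹³+e²⁴, ω₂∧α = (e¹²+e⁴³)∧e⁵, ω₃∧α = (e¹⁴+e³²)∧e⁵ are all closed under the Chevalley–Eilenberg differential. -/
open ExteriorAlgebra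

/-- Basis `e¹,…,e⁵` of `𝔤*` (0-indexed: `e i` is `e^{i+1}`) inside `Λ*𝔤*`. -/
noncomputable def e (i : Fin 5) : ExteriorAlgebra ℝ (Fin 5 → ℝ) := ι ℝ (Pi.single i 1)

lemma e_sq (i : Fin 5) : e i * e i = 0 := ι_sq_zero _

lemma e_sw (i j : Fin 5) : e i * e j = -(e j * e i) :=
  eq_neg_of_add_eq_zero_left (ι_add_mul_swap _ _)

lemma eiji (i j : Fin 5) : e i * e j * e i = 0 := by
  calc e i * e j * e i = e i * (e j * e i) := by noncomm_ring
    _ = e i * (-(e i * e j)) := by rw [e_sw j i]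
    _ = -(e i * e i * e j) := by noncomm_ring
    _ = 0 := by rw [e_sq]; simp

lemma eijkj (i j k : Fin 5) : e i * e j * (e k * e j) = 0 := by
  calc e i * e j * (e k * e j) = e i * (e j * e k) * e j := by noncomm_ring
    _ = e i * (-(e k * e j)) * e j := by rw [e_sw j k]
    _ = -(e i * e k * (e j * e j)) := by noncomm_ring
    _ = 0 := by rw [e_sq]; simp

/-- on the nilpotent Lie algebra `A₅,₁` with `de¹ = e³⁵`, `de² = e⁴⁵`,
`de³ = de⁴ = de⁵ = 0`, the SU(2)-structure adapted to the coframe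
`f¹=e¹, f²=e³, f³=e², f⁴=e⁴, f⁵=e⁵` is hypo: the forms `ω₁ = e¹³+e²⁴`,
`ω₂∧α = (e¹²+e⁴³)∧e⁵`, `ω₃∧α = (e¹⁴+e³²)∧e⁵` are closed. -/
theorem stmt4 (d : ExteriorAlgebra ℝ (Fin 5 → ℝ) →ₗ[ℝ] ExteriorAlgebra ℝ (Fin 5 → ℝ))
    (hone : d 1 = 0)
    (hleib : ∀ (v : Fin 5 → ℝ) (x : ExteriorAlgebra ℝ (Fin 5 → ℝ)),
      d (ι ℝ v * x) = d (ι ℝ v) * x - ι ℝ v * d x)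
    (h1 : d (e 0) = e 2 * e 4) (h2 : d (e 1) = e 3 * e 4)
    (h3 : d (e 2) = 0) (h4 : d (e 3) = 0) (h5 : d (e 4) = 0) :
    d (e 0 * e 2 + e 1 * e 3) = 0 ∧
    d ((e 0 * e 1 + e 3 * e 2) * e 4) = 0 ∧
    d ((e 0 * e 3 + e 2 * e 1) * e 4) = 0 := by
  have dl : ∀ (i : Fin 5) (x : ExteriorAlgebra ℝ (Fin 5 → ℝ)),
      d (e i * x) = d (e i) * x - e i * d x := fun i x => hleib (Pi.single i 1) x
  have d14 : d (e 1 * e 4) = 0 := by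
    rw [dl, h2, h5, mul_assoc, e_sq]; simp
  have d24 : d (e 2 * e 4) = 0 := by rw [dl, h3, h5]; simp
  have d34 : d (e 3 * e 4) = 0 := by rw [dl, h4, h5]; simp
  refine ⟨?_, ?_, ?_⟩
  · rw [map_add, dl, dl, h1, h2, h3, h4, eiji 2 4, eiji 3 4]; simp
  · rw [add_mul, map_add, mul_assoc, mul_assoc, dl, dl, h1, dl 3, h4, d24, h2, h5, eijkj 2 4 1]
    simp [mul_assoc, e_sq]
  · rw [add_mul, map_add, mul_assoc, mul_assoc, dl, dl, h1, dl 2, h3, d14, h4, h5, eijkj 2 4 3]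
    simp [mul_assoc, e_sq]
end

section
/- Let 𝔤 be a 5-dimensional Lie algebra, let α, β ∈ 𝔤* be linearly independent, let Z³ be the space of closed 3-forms, and set V = {γ ∈ Z³ : γ∧α = 0}. If dim(β∧V) < 2 (as a subspace of Λ⁴𝔤*), then 𝔤 admits no hypo structure whose almost-contact form is α. -/
open ExteriorAlgebra

/-- The space of 2-forms `Λ²𝔤*` (spanned by decomposable 2-forms). -/
noncomputable def Lam2 : Submodule ℝ (ExteriorAlgebra ℝ (Fin 5 → ℝ)) :=
  Submodule.span ℝ {x | ∃ a b : Fin 5 → ℝ, x = ι ℝ a * ι ℝ b}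

/-- The space of 3-forms `Λ³𝔤*`. -/
noncomputable def Lam3 : Submodule ℝ (ExteriorAlgebra ℝ (Fin 5 → ℝ)) :=
  Submodule.span ℝ {x | ∃ a b c : Fin 5 → ℝ, x = ι ℝ a * ι ℝ b * ι ℝ c}

/-- A hypo structure on the 5-dimensional Lie algebra encoded by its Chevalley–Eilenberg
differential `d`: a quadruplet `(α, ω₁, ω₂, ω₃)` of a 1-form `α = ι a` and 2-forms `ωᵢ`
with `ωᵢ∧ωⱼ = δᵢⱼ v` for a 4-form `v` with `v∧α ≠ 0`, such that
`dω₁ = 0`, `d(ω₂∧α) = 0`, `d(ω₃∧α) = 0`. -/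
def IsHypo (d : ExteriorAlgebra ℝ (Fin 5 → ℝ) →ₗ[ℝ] ExteriorAlgebra ℝ (Fin 5 → ℝ))
    (a : Fin 5 → ℝ) (ω : Fin 3 → ExteriorAlgebra ℝ (Fin 5 → ℝ)) : Prop :=
  (∀ i, ω i ∈ Lam2) ∧
  (∃ v : ExteriorAlgebra ℝ (Fin 5 → ℝ),
    (∀ i j, ω i * ω j = if i = j then v else 0) ∧ v * ι ℝ a ≠ 0) ∧
  d (ω 0) = 0 ∧ d (ω 1 * ι ℝ a) = 0 ∧ d (ω 2 * ι ℝ a) = 0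

/-! If `W = s ω₂ + t ω₃` satisfies `β∧W∧α = 0`, contracting with a covector `f` with
`f(α) = 0`, `f(β) = 1` gives `α∧W = α∧β∧(f⌋W)`, hence `W∧W∧α = W∧α∧β∧(f⌋W) = 0`.
As `W∧W = (s² + t²) v` and `v∧α ≠ 0`, this forces `s = t = 0`: the forms `β∧ω₂∧α` and
`β∧ω₃∧α` of `β∧V` are linearly independent. -/

theorem Module.exists_dual_apply_eq_zero_apply_eq_one {K V : Type*} [Field K] [AddCommGroup V]
    [Module K V] {a b : V} (hab : LinearIndependent K ![a, b]) :
    ∃ f : Module.Dual K V, f a = 0 ∧ f b = 1 := by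
  have hb : b ∉ K ∙ a := by
    intro h
    obtain ⟨c, rfl⟩ := Submodule.mem_span_singleton.mp h
    simpa using (LinearIndependent.pair_iff.mp hab c (-1) (by simp))
  obtain ⟨f, hfb, hf⟩ := Submodule.exists_dual_map_eq_bot_of_notMem hb inferInstance
  have hfa : f a = 0 := by
    simpa [hf] using Submodule.mem_map_of_mem (f := f) (Submodule.mem_span_singleton_self a)
  exact ⟨(f b)⁻¹ • f, by simp [hfa], by simp [hfb]⟩

section Contraction

variable {R M : Type*} [CommRing R] [AddCommGroup M] [Module R M]

theorem ι_mul_eq_ι_mul_ι_mul_contractLeft {a b : M} {f : Module.Dual R M}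
    (hfa : f a = 0) (hfb : f b = 1) {ω : ExteriorAlgebra R M}
    (h : ι R a * (ι R b * ω) = 0) :
    ι R a * ω = ι R a * (ι R b * CliffordAlgebra.contractLeft f ω) := by
  have := congrArg (CliffordAlgebra.contractLeft f) h
  rw [map_zero, CliffordAlgebra.contractLeft_ι_mul, CliffordAlgebra.contractLeft_ι_mul] at this
  simpa only [hfa, hfb, zero_smul, one_smul, zero_sub, mul_sub, neg_eq_zero, sub_eq_zero]
    using this

theorem mul_mul_ι_eq_zero_of_mul_ι_mul_ι_eq_zero {a b : M} {f : Module.Dual R M}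
    (hfa : f a = 0) (hfb : f b = 1) {ω : ExteriorAlgebra R M}
    (hω : ∀ x, ι R x * ω = ω * ι R x) (h : ω * ι R a * ι R b = 0) :
    ω * ω * ι R a = 0 := by
  have h' : ι R a * (ι R b * ω) = 0 := by
    rw [hω b, ← mul_assoc, hω a, h]
  calc ω * ω * ι R a = ω * (ι R a * ω) := by rw [mul_assoc, hω]
    _ = ω * ι R a * ι R b * CliffordAlgebra.contractLeft f ω := by
      rw [ι_mul_eq_ι_mul_ι_mul_contractLeft hfa hfb h']; simp only [mul_assoc]
    _ = 0 := by rw [h, zero_mul]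

end Contraction

section OrderedField

variable {R M : Type*} [Field R] [LinearOrder R] [IsStrictOrderedRing R] [AddCommGroup M]
  [Module R M]

theorem linearIndependent_ι_mul_mul_ι {a b : M} {f : Module.Dual R M}
    (hfa : f a = 0) (hfb : f b = 1) {ω₁ ω₂ v : ExteriorAlgebra R M}
    (hω₁ : ∀ x, ι R x * ω₁ = ω₁ * ι R x) (hω₂ : ∀ x, ι R x * ω₂ = ω₂ * ι R x)
    (h₁₁ : ω₁ * ω₁ = v) (h₁₂ : ω₁ * ω₂ = 0) (h₂₁ : ω₂ * ω₁ = 0) (h₂₂ : ω₂ * ω₂ = v)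
    (hva : v * ι R a ≠ 0) :
    LinearIndependent R ![ι R b * (ω₁ * ι R a), ι R b * (ω₂ * ι R a)] := by
  refine LinearIndependent.pair_iff.mpr fun s t hst => ?_
  set W := s • ω₁ + t • ω₂
  have hW : ∀ x, ι R x * W = W * ι R x := fun x => by
    simp only [W, mul_add, add_mul, mul_smul_comm, smul_mul_assoc, hω₁, hω₂]
  have hWab : W * ι R a * ι R b = 0 := by
    have hbWa : ι R b * (W * ι R a) = 0 := by
      simpa only [W, add_mul, mul_add, smul_mul_assoc, mul_smul_comm] using hst
    rw [mul_assoc, eq_neg_of_add_eq_zero_left (ι_add_mul_swap a b), mul_neg, ← mul_assoc,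
      ← hW, mul_assoc, hbWa, neg_zero]
  have hsq : W * W = (s ^ 2 + t ^ 2) • v := by
    simp only [W, add_mul, mul_add, smul_mul_assoc, mul_smul_comm, h₁₁, h₁₂, h₂₁, h₂₂,
      smul_zero, add_zero, zero_add, smul_smul, ← add_smul, sq]
  have hst0 : s ^ 2 + t ^ 2 = 0 := by
    have := mul_mul_ι_eq_zero_of_mul_ι_mul_ι_eq_zero hfa hfb hW hWab
    rw [hsq, smul_mul_assoc] at this
    exact (smul_eq_zero.mp this).resolve_right hva
  constructor <;> nlinarith [sq_nonneg s, sq_nonneg t]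

end OrderedField

theorem ExteriorAlgebra.ι_mul_mem_exteriorPower_succ {R M : Type*} [CommRing R] [AddCommGroup M]
    [Module R M] {n : ℕ} {x : ExteriorAlgebra R M} (hx : x ∈ ⋀[R]^n M) (m : M) :
    ι R m * x ∈ ⋀[R]^(n + 1) M := by
  rw [exteriorPower, pow_succ']
  exact Submodule.mul_mem_mul (LinearMap.mem_range_self _ m) hx

theorem ι_mul_eq_mul_ι_of_mem_Lam2 {ω : ExteriorAlgebra ℝ (Fin 5 → ℝ)} (hω : ω ∈ Lam2)
    (x : Fin 5 → ℝ) : ι ℝ x * ω = ω * ι ℝ x := by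
  induction hω using Submodule.span_induction with
  | mem y hy =>
    obtain ⟨p, q, rfl⟩ := hy
    have swap := fun y : Fin 5 → ℝ => eq_neg_of_add_eq_zero_left (ι_add_mul_swap (R := ℝ) x y)
    rw [← mul_assoc, swap p, neg_mul, mul_assoc, swap q, mul_neg, neg_neg, mul_assoc]
  | zero => simp
  | add y z _ _ hy hz => rw [mul_add, add_mul, hy, hz]
  | smul r y _ hy => rw [mul_smul_comm, smul_mul_assoc, hy]

theorem mul_ι_mem_Lam3 {ω : ExteriorAlgebra ℝ (Fin 5 → ℝ)} (hω : ω ∈ Lam2) (x : Fin 5 → ℝ) :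
    ω * ι ℝ x ∈ Lam3 := by
  induction hω using Submodule.span_induction with
  | mem y hy => obtain ⟨p, q, rfl⟩ := hy; exact Submodule.subset_span ⟨p, q, x, rfl⟩
  | zero => rw [zero_mul]; exact Submodule.zero_mem _
  | add y z _ _ hy hz => rw [add_mul]; exact Submodule.add_mem _ hy hz
  | smul r y _ hy => rw [smul_mul_assoc]; exact Submodule.smul_mem _ _ hy

theorem Lam3_le_exteriorPower : Lam3 ≤ ⋀[ℝ]^3 (Fin 5 → ℝ) := by
  refine Submodule.span_le.mpr ?_
  rintro _ ⟨x, y, z, rfl⟩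
  rw [SetLike.mem_coe, exteriorPower, pow_three']
  exact Submodule.mul_mem_mul (Submodule.mul_mem_mul (LinearMap.mem_range_self _ x)
    (LinearMap.mem_range_self _ y)) (LinearMap.mem_range_self _ z)

theorem stmt8_general (d : ExteriorAlgebra ℝ (Fin 5 → ℝ) →ₗ[ℝ] ExteriorAlgebra ℝ (Fin 5 → ℝ))
    (a b : Fin 5 → ℝ) (hab : LinearIndependent ℝ ![a, b])
    (hdim : Module.finrank ℝ
      (Submodule.map (LinearMap.mulLeft ℝ (ι ℝ b))
        ((Lam3 ⊓ LinearMap.ker d) ⊓ LinearMap.ker (LinearMap.mulRight ℝ (ι ℝ a)))) < 2) :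
    ¬ ∃ ω : Fin 3 → ExteriorAlgebra ℝ (Fin 5 → ℝ), IsHypo d a ω := by
  rintro ⟨ω, hω, ⟨v, hv, hva⟩, -, hd₁, hd₂⟩
  set βV := Submodule.map (LinearMap.mulLeft ℝ (ι ℝ b))
    ((Lam3 ⊓ LinearMap.ker d) ⊓ LinearMap.ker (LinearMap.mulRight ℝ (ι ℝ a)))
  obtain ⟨f, hfa, hfb⟩ := Module.exists_dual_apply_eq_zero_apply_eq_one hab
  have hind := linearIndependent_ι_mul_mul_ι hfa hfb (ι_mul_eq_mul_ι_of_mem_Lam2 (hω 1))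
    (ι_mul_eq_mul_ι_of_mem_Lam2 (hω 2)) (by simpa using hv 1 1) (by simpa using hv 1 2)
    (by simpa using hv 2 1) (by simpa using hv 2 2) hva
  have hmem : ∀ i, d (ω i * ι ℝ a) = 0 → ι ℝ b * (ω i * ι ℝ a) ∈ βV := fun i hdi =>
    ⟨_, ⟨⟨mul_ι_mem_Lam3 (hω i) a, hdi⟩, by simp [mul_assoc]⟩, rfl⟩
  have hspan : Submodule.span ℝ (Set.range ![ι ℝ b * (ω 1 * ι ℝ a), ι ℝ b * (ω 2 * ι ℝ a)])
      ≤ βV := by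
    rw [Submodule.span_le, Set.range_subset_iff, Fin.forall_fin_two]
    exact ⟨hmem 1 hd₁, hmem 2 hd₂⟩
  -- `finrank` vanishes on infinite-dimensional spaces, so finiteness has to be checked.
  have : FiniteDimensional ℝ βV := Submodule.finiteDimensional_of_le (S₂ := ⋀[ℝ]^4 _) <| by
    rintro _ ⟨γ, hγ, rfl⟩
    exact ExteriorAlgebra.ι_mul_mem_exteriorPower_succ (Lam3_le_exteriorPower hγ.1.1) b
  have := Submodule.finrank_mono hspan
  rw [finrank_span_eq_card hind, Fintype.card_fin] at this
  omega

/-- let `𝔤` be a 5-dimensional Lie algebra (encoded by its Chevalley–Eilenberg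
differential `d`), `α = ι a` and `β = ι b` linearly independent 1-forms, and
`V = {γ ∈ Z³ : γ∧α = 0}`. If `dim(β∧V) < 2`, then `𝔤` has no hypo structure whose
almost-contact form is `α`. -/
theorem stmt8 (d : ExteriorAlgebra ℝ (Fin 5 → ℝ) →ₗ[ℝ] ExteriorAlgebra ℝ (Fin 5 → ℝ))
    (hone : d 1 = 0)
    (hleib : ∀ (v : Fin 5 → ℝ) (x : ExteriorAlgebra ℝ (Fin 5 → ℝ)),
      d (ι ℝ v * x) = d (ι ℝ v) * x - ι ℝ v * d x)
    (hdd : ∀ x, d (d x) = 0)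
    (hd1 : ∀ v : Fin 5 → ℝ, d (ι ℝ v) ∈ Lam2)
    (a b : Fin 5 → ℝ) (hab : LinearIndependent ℝ ![a, b])
    (hdim : Module.finrank ℝ
      (Submodule.map (LinearMap.mulLeft ℝ (ι ℝ b))
        ((Lam3 ⊓ LinearMap.ker d) ⊓ LinearMap.ker (LinearMap.mulRight ℝ (ι ℝ a)))) < 2) :
    ¬ ∃ ω : Fin 3 → ExteriorAlgebra ℝ (Fin 5 → ℝ), IsHypo d a ω :=
  stmt8_general d a b hab hdim
end
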